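/- arXiv:1107.0463 — 3 statements merged into one kernel-verified Lean document; each statement's English description precedes it below -/
import Mathlib

section
/- Let (λ_j)_{j∈ℕ} be a nondecreasing sequence of nonnegative real numbers tending to +∞, let (b_j)_{j∈ℕ} be nonnegative real numbers, and let τ > 0, s > 0, C > 0. Assume that the tempered sums P(Λ) := ∑_{j : λ_j ≤ Λ} e^{−2τλ_j} b_j satisfy P(Λ)/Λ^s → C as Λ → +∞. Then (1/Λ) · log(∑_{j : λ_j ≤ Λ} b_j) → 2τ as Λ → +∞. -/
/-!
Write `S(Λ) = ∑_{λ_j ≤ Λ} b_j`. Since `λ_j ≤ Λ` on the support of both sums,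
`S(Λ) ≤ e^{2τΛ} P(Λ)`, while the eigenvalues in `(κΛ, Λ]` give
`S(Λ) ≥ e^{2τκΛ} (P(Λ) - P(κΛ))` for every `κ < 1`. Polynomial growth `P(Λ) ~ C Λ^s` makes
both `log P(Λ)` and `log (P(Λ) - P(κΛ)) ~ log (C (1 - κ^s) Λ^s)` negligible against `Λ`,
so `log S(Λ) / Λ` is squeezed between `2τκ` and `2τ`, and `κ → 1` concludes.
-/

open Filter Topology Real

noncomputable def truncatedSum {M : Type*} [AddCommMonoid M] [TopologicalSpace M]
    (lam : ℕ → ℝ) (f : ℕ → M) (Λ : ℝ) : M :=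
  ∑' j, if lam j ≤ Λ then f j else 0

theorem summable_truncated {M : Type*} [AddCommMonoid M] [TopologicalSpace M]
    {lam : ℕ → ℝ} (htend : Tendsto lam atTop atTop) (f : ℕ → M) (Λ : ℝ) :
    Summable fun j => if lam j ≤ Λ then f j else 0 := by
  obtain ⟨N, hN⟩ := (htend.eventually_gt_atTop Λ).exists_forall_of_atTop
  refine summable_of_ne_finset_zero (s := Finset.range N) fun j hj => ?_
  rw [if_neg (hN j (by simpa using hj)).not_ge]

section Comparison

variable {lam b : ℕ → ℝ} {a : ℝ}

theorem truncatedSum_le_exp_mul (htend : Tendsto lam atTop atTop) (hb : ∀ j, 0 ≤ b j)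
    (ha : 0 ≤ a) (Λ : ℝ) :
    truncatedSum lam b Λ ≤
      exp (a * Λ) * truncatedSum lam (fun j => exp (-(a * lam j)) * b j) Λ := by
  rw [truncatedSum, truncatedSum, ← tsum_mul_left]
  refine (summable_truncated htend _ Λ).tsum_le_tsum (fun j => ?_)
    ((summable_truncated htend _ Λ).mul_left _)
  split_ifs with hj
  · rw [← mul_assoc, ← exp_add]
    exact le_mul_of_one_le_left (hb j) (one_le_exp (by nlinarith))
  · simp

theorem exp_mul_sub_truncatedSum_le (htend : Tendsto lam atTop atTop) (hb : ∀ j, 0 ≤ b j)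
    (ha : 0 ≤ a) (Λ' Λ : ℝ) :
    exp (a * Λ') * (truncatedSum lam (fun j => exp (-(a * lam j)) * b j) Λ -
      truncatedSum lam (fun j => exp (-(a * lam j)) * b j) Λ') ≤ truncatedSum lam b Λ := by
  set w := fun j => exp (-(a * lam j)) * b j
  have hw : ∀ Λ, Summable fun j => if lam j ≤ Λ then w j else 0 := summable_truncated htend w
  rw [truncatedSum, truncatedSum, truncatedSum, ← (hw Λ).tsum_sub (hw Λ'), ← tsum_mul_left]
  refine Summable.tsum_le_tsum (fun j => ?_) (((hw Λ).sub (hw Λ')).mul_left _)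
    (summable_truncated htend b Λ)
  split_ifs with hΛ hΛ'
  · rw [sub_self, mul_zero]
    exact hb j
  · rw [sub_zero, ← mul_assoc, ← exp_add]
    exact mul_le_of_le_one_left (hb j) (exp_le_one_iff.2 (by nlinarith))
  · rw [zero_sub, mul_neg, neg_nonpos]
    exact mul_nonneg (exp_pos _).le (mul_nonneg (exp_pos _).le (hb j))
  · simp

end Comparison

section Asymptotics

variable {g : ℝ → ℝ} {s C : ℝ}

theorem eventually_pos_of_tendsto_div_rpow (hC : 0 < C)
    (h : Tendsto (fun Λ => g Λ / Λ ^ s) atTop (𝓝 C)) : ∀ᶠ Λ in atTop, 0 < g Λ := by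
  filter_upwards [h.eventually (eventually_gt_nhds hC), eventually_gt_atTop 0] with Λ hpos hΛ
  exact (div_pos_iff_of_pos_right (rpow_pos_of_pos hΛ s)).1 hpos

theorem tendsto_log_div_self_of_tendsto_div_rpow (hC : 0 < C)
    (h : Tendsto (fun Λ => g Λ / Λ ^ s) atTop (𝓝 C)) :
    Tendsto (fun Λ => log (g Λ) / Λ) atTop (𝓝 0) := by
  have hquot : Tendsto (fun Λ => log (g Λ / Λ ^ s) / Λ) atTop (𝓝 0) :=
    ((continuousAt_log hC.ne').tendsto.comp h).div_atTop tendsto_id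
  have hpow : Tendsto (fun Λ => s * (log Λ / Λ)) atTop (𝓝 0) := by
    simpa using (isLittleO_log_id_atTop.tendsto_div_nhds_zero).const_mul s
  have hsum := hquot.add hpow
  rw [add_zero] at hsum
  refine hsum.congr' ?_
  filter_upwards [eventually_gt_atTop 0, eventually_pos_of_tendsto_div_rpow hC h] with Λ hΛ hg
  rw [log_div hg.ne' (rpow_pos_of_pos hΛ s).ne', log_rpow hΛ]
  field_simp
  ring

theorem tendsto_sub_comp_mul_div_rpow {κ : ℝ} (hκ : 0 < κ)
    (h : Tendsto (fun Λ => g Λ / Λ ^ s) atTop (𝓝 C)) :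
    Tendsto (fun Λ => (g Λ - g (κ * Λ)) / Λ ^ s) atTop (𝓝 (C * (1 - κ ^ s))) := by
  have hscaled : Tendsto (fun Λ => g (κ * Λ) / (κ * Λ) ^ s * κ ^ s) atTop (𝓝 (C * κ ^ s)) :=
    (h.comp (tendsto_id.const_mul_atTop hκ)).mul_const _
  rw [mul_one_sub]
  refine (h.sub hscaled).congr' ?_
  filter_upwards [eventually_gt_atTop 0] with Λ hΛ
  rw [mul_rpow hκ.le hΛ.le, sub_div]
  field_simp [(rpow_pos_of_pos hκ s).ne']

end Asymptotics

theorem log_exp_mul_div_self {a Λ x : ℝ} (hΛ : Λ ≠ 0) (hx : 0 < x) :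
    log (exp (a * Λ) * x) / Λ = a + log x / Λ := by
  rw [log_mul (exp_ne_zero _) hx.ne', log_exp]
  field_simp

section Squeeze

variable {S g : ℝ → ℝ} {a c : ℝ}

theorem eventually_log_div_self_lt (hc : a < c)
    (hg : Tendsto (fun Λ => log (g Λ) / Λ) atTop (𝓝 0))
    (hS : ∀ᶠ Λ in atTop, 0 < S Λ) (hle : ∀ᶠ Λ in atTop, S Λ ≤ exp (a * Λ) * g Λ) :
    ∀ᶠ Λ in atTop, log (S Λ) / Λ < c := by
  have hlim : Tendsto (fun Λ => a + log (g Λ) / Λ) atTop (𝓝 a) := by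
    simpa using hg.const_add a
  filter_upwards [hlim.eventually (eventually_lt_nhds hc), hS, hle, eventually_gt_atTop 0]
    with Λ hlt hSΛ hleΛ hΛ
  have hgΛ : 0 < g Λ := pos_of_mul_pos_right (hSΛ.trans_le hleΛ) (exp_pos _).le
  calc log (S Λ) / Λ ≤ log (exp (a * Λ) * g Λ) / Λ :=
        div_le_div_of_nonneg_right (log_le_log hSΛ hleΛ) hΛ.le
    _ = a + log (g Λ) / Λ := log_exp_mul_div_self hΛ.ne' hgΛ
    _ < c := hlt

theorem eventually_lt_log_div_self (hc : c < a)
    (hg : Tendsto (fun Λ => log (g Λ) / Λ) atTop (𝓝 0))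
    (hgpos : ∀ᶠ Λ in atTop, 0 < g Λ) (hle : ∀ᶠ Λ in atTop, exp (a * Λ) * g Λ ≤ S Λ) :
    ∀ᶠ Λ in atTop, c < log (S Λ) / Λ := by
  have hlim : Tendsto (fun Λ => a + log (g Λ) / Λ) atTop (𝓝 a) := by
    simpa using hg.const_add a
  filter_upwards [hlim.eventually (eventually_gt_nhds hc), hgpos, hle, eventually_gt_atTop 0]
    with Λ hlt hgΛ hleΛ hΛ
  calc c < a + log (g Λ) / Λ := hlt
    _ = log (exp (a * Λ) * g Λ) / Λ := (log_exp_mul_div_self hΛ.ne' hgΛ).symm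
    _ ≤ log (S Λ) / Λ := div_le_div_of_nonneg_right (log_le_log (by positivity) hleΛ) hΛ.le

end Squeeze

theorem tendsto_log_div_self_of_exp_mul_bounds {P S : ℝ → ℝ} {a s C : ℝ}
    (ha : 0 < a) (hs : 0 < s) (hC : 0 < C)
    (hP : Tendsto (fun Λ => P Λ / Λ ^ s) atTop (𝓝 C))
    (hupper : ∀ᶠ Λ in atTop, S Λ ≤ exp (a * Λ) * P Λ)
    (hlower : ∀ κ ∈ Set.Ioo (0 : ℝ) 1,
      ∀ᶠ Λ in atTop, exp (a * (κ * Λ)) * (P Λ - P (κ * Λ)) ≤ S Λ) :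
    Tendsto (fun Λ => log (S Λ) / Λ) atTop (𝓝 a) := by
  have hdiff : ∀ κ ∈ Set.Ioo (0 : ℝ) 1,
      Tendsto (fun Λ => (P Λ - P (κ * Λ)) / Λ ^ s) atTop (𝓝 (C * (1 - κ ^ s))) ∧
        0 < C * (1 - κ ^ s) := fun κ hκ =>
    ⟨tendsto_sub_comp_mul_div_rpow hκ.1 hP,
      mul_pos hC (sub_pos.2 (rpow_lt_one hκ.1.le hκ.2 hs))⟩
  have hhalf : (1 / 2 : ℝ) ∈ Set.Ioo 0 1 := by norm_num
  have hSpos : ∀ᶠ Λ in atTop, 0 < S Λ := by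
    filter_upwards [hlower _ hhalf,
      eventually_pos_of_tendsto_div_rpow (hdiff _ hhalf).2 (hdiff _ hhalf).1]
      with Λ hle hpos
    exact (mul_pos (exp_pos _) hpos).trans_le hle
  refine tendsto_order.2 ⟨fun c hc => ?_, fun c hc =>
    eventually_log_div_self_lt hc (tendsto_log_div_self_of_tendsto_div_rpow hC hP) hSpos hupper⟩
  obtain ⟨κ, hκc, hκ1⟩ := exists_between (max_lt ((div_lt_one ha).2 hc) one_pos)
  have hκ : κ ∈ Set.Ioo (0 : ℝ) 1 := ⟨(le_max_right _ _).trans_lt hκc, hκ1⟩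
  have hcκ : c < a * κ := by
    rw [mul_comm]
    exact (div_lt_iff₀ ha).1 ((le_max_left _ _).trans_lt hκc)
  refine eventually_lt_log_div_self hcκ
    (tendsto_log_div_self_of_tendsto_div_rpow (hdiff κ hκ).2 (hdiff κ hκ).1)
    (eventually_pos_of_tendsto_div_rpow (hdiff κ hκ).2 (hdiff κ hκ).1) ?_
  simpa only [mul_assoc] using hlower κ hκ

theorem log_asymptotics_of_tempered_weyl_general
    (lam b : ℕ → ℝ)
    (htend : Tendsto lam atTop atTop) (hb : ∀ j, 0 ≤ b j)
    (τ s C : ℝ) (hτ : 0 < τ) (hs : 0 < s) (hC : 0 < C)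
    (hP : Tendsto
      (fun Λ : ℝ => (∑' j, if lam j ≤ Λ then Real.exp (-2 * τ * lam j) * b j else 0) / Λ ^ s)
      atTop (nhds C)) :
    Tendsto (fun Λ : ℝ => Real.log (∑' j, if lam j ≤ Λ then b j else 0) / Λ)
      atTop (nhds (2 * τ)) := by
  simp only [neg_mul] at hP
  have ha : 0 ≤ 2 * τ := by positivity
  exact tendsto_log_div_self_of_exp_mul_bounds (by positivity) hs hC hP
    (.of_forall (truncatedSum_le_exp_mul htend hb ha))
    (fun κ _ => .of_forall fun Λ => exp_mul_sub_truncatedSum_le htend hb ha (κ * Λ) Λ)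

/-- Polynomial asymptotics of the tempered spectral sums imply logarithmic
asymptotics of the untempered sums. -/
theorem log_asymptotics_of_tempered_weyl
    (lam b : ℕ → ℝ) (hmono : Monotone lam) (hlam : ∀ j, 0 ≤ lam j)
    (htend : Tendsto lam atTop atTop) (hb : ∀ j, 0 ≤ b j)
    (τ s C : ℝ) (hτ : 0 < τ) (hs : 0 < s) (hC : 0 < C)
    (hP : Tendsto
      (fun Λ : ℝ => (∑' j, if lam j ≤ Λ then Real.exp (-2 * τ * lam j) * b j else 0) / Λ ^ s)
      atTop (nhds C)) :
    Tendsto (fun Λ : ℝ => Real.log (∑' j, if lam j ≤ Λ then b j else 0) / Λ)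
      atTop (nhds (2 * τ)) :=
  log_asymptotics_of_tempered_weyl_general lam b htend hb τ s C hτ hs hC hP
end

section
/- Let n ≥ 1, t ∈ ℝ, τ > 0, and y ∈ ℝⁿ. Then the function F : ℂⁿ → ℂ defined by F(z) = ∫_{ℝⁿ} e^{i(t+iτ)‖ξ‖} exp(i ∑_{j=1}^n ξ_j (z_j − y_j)) dξ is complex differentiable (holomorphic) on the tube domain {z ∈ ℂⁿ : ‖Im z‖ < τ}, where Im z = (Im z_1, …, Im z_n). -/
/-!
Differentiate under the integral sign. For `ξ ∈ ℝⁿ` the integrand is `e^{i(t+iτ)‖ξ‖}` times the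
exponential of the `ℂ`-linear form `z ↦ i ∑ ξ_j (z_j - y_j)`, so it is entire in `z`, with
derivative bounded by a constant times `‖ξ‖` times its modulus. Its modulus is
`e^{-τ‖ξ‖ - ⟨ξ, Im z⟩} ≤ e^{-(τ - ‖Im z‖)‖ξ‖}` by Cauchy–Schwarz, so on a neighbourhood of a point
of the tube where `‖Im z‖ ≤ τ - δ` both the integrand and its derivative are dominated by the
integrable functions `‖ξ‖ᵏ e^{-δ‖ξ‖}`, `k = 0, 1`.
-/

open MeasureTheory

section

variable {E : Type*} [NormedAddCommGroup E] [NormedSpace ℝ E] [FiniteDimensional ℝ E]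
  [MeasurableSpace E] [BorelSpace E] (μ : Measure E) [μ.IsAddHaarMeasure]

theorem integrable_norm_pow_mul_exp_neg_mul_norm (k : ℕ) {c : ℝ} (hc : 0 < c) :
    Integrable (fun x : E => ‖x‖ ^ k * Real.exp (-(c * ‖x‖))) μ := by
  rcases subsingleton_or_nontrivial E with hE | hE
  · exact Integrable.of_finite
  · refine (integrable_fun_norm_addHaar μ (f := fun r => r ^ k * Real.exp (-(c * r)))).2 ?_
    refine (integrableOn_rpow_mul_exp_neg_mul_rpow (s := ((Module.finrank ℝ E - 1 + k : ℕ) : ℝ))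
      (neg_one_lt_zero.trans_le (Nat.cast_nonneg _)) one_pos hc).congr_fun (fun r _ => ?_)
      measurableSet_Ioi
    simp only [Real.rpow_natCast, Real.rpow_one, pow_add, smul_eq_mul, neg_mul, mul_assoc]

end

namespace PoissonWaveKernel

variable {n : ℕ}

def euclideanIm (z : Fin n → ℂ) : EuclideanSpace ℝ (Fin n) := WithLp.toLp 2 fun j => (z j).im

theorem continuous_euclideanIm : Continuous (euclideanIm (n := n)) := by
  unfold euclideanIm; fun_prop

theorem norm_euclideanIm (z : Fin n → ℂ) : ‖euclideanIm z‖ = √(∑ j, (z j).im ^ 2) := by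
  simp [euclideanIm, EuclideanSpace.norm_eq]

noncomputable def pairing : EuclideanSpace ℝ (Fin n) →L[ℝ] (Fin n → ℂ) →L[ℂ] ℂ :=
  ∑ j, (EuclideanSpace.proj j).smulRight (ContinuousLinearMap.proj j)

theorem pairing_apply (ξ : EuclideanSpace ℝ (Fin n)) (z : Fin n → ℂ) :
    pairing ξ z = ∑ j, (ξ j : ℂ) * z j := by
  simp [pairing, Complex.real_smul]

theorem im_pairing (ξ : EuclideanSpace ℝ (Fin n)) (z : Fin n → ℂ) :
    (pairing ξ z).im = inner ℝ ξ (euclideanIm z) := by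
  simp [pairing_apply, euclideanIm, PiLp.inner_apply, mul_comm]

section

variable (t τ : ℝ) (y : Fin n → ℝ)

noncomputable def integrand (z : Fin n → ℂ) (ξ : EuclideanSpace ℝ (Fin n)) : ℂ :=
  Complex.exp (Complex.I * ((t : ℂ) + τ * Complex.I) * ‖ξ‖) *
    Complex.exp (Complex.I * ∑ j, (ξ j : ℂ) * (z j - (y j : ℂ)))

theorem integrand_eq_exp_pairing (z : Fin n → ℂ) (ξ : EuclideanSpace ℝ (Fin n)) :
    integrand t τ y z ξ = Complex.exp (Complex.I * ((t : ℂ) + τ * Complex.I) * ‖ξ‖) *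
      Complex.exp (Complex.I * (pairing ξ z - pairing ξ (fun j => y j))) := by
  simp only [integrand, pairing_apply, mul_sub, Finset.sum_sub_distrib]

theorem continuous_integrand (z : Fin n → ℂ) :
    Continuous (integrand t τ y z) := by
  unfold integrand; fun_prop

theorem norm_integrand (z : Fin n → ℂ) (ξ : EuclideanSpace ℝ (Fin n)) :
    ‖integrand t τ y z ξ‖ = Real.exp (-(τ * ‖ξ‖) - inner ℝ ξ (euclideanIm z)) := by
  rw [integrand_eq_exp_pairing, norm_mul, Complex.norm_exp, Complex.norm_exp, ← Real.exp_add,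
    ← im_pairing]
  simp [Complex.mul_re, sub_eq_add_neg, im_pairing, euclideanIm, PiLp.inner_apply]

theorem norm_integrand_le (z : Fin n → ℂ) (ξ : EuclideanSpace ℝ (Fin n)) :
    ‖integrand t τ y z ξ‖ ≤ Real.exp (-((τ - ‖euclideanIm z‖) * ‖ξ‖)) := by
  rw [norm_integrand, Real.exp_le_exp]
  nlinarith [neg_le_of_abs_le (abs_real_inner_le_norm ξ (euclideanIm z))]

theorem hasFDerivAt_integrand (z : Fin n → ℂ) (ξ : EuclideanSpace ℝ (Fin n)) :
    HasFDerivAt (integrand t τ y · ξ)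
      (integrand t τ y z ξ • Complex.I • pairing ξ) z := by
  have h := ((((pairing ξ).hasFDerivAt (x := z)).sub_const
    (pairing ξ fun j => (y j : ℂ))).const_mul Complex.I).cexp.const_mul
    (Complex.exp (Complex.I * ((t : ℂ) + τ * Complex.I) * ‖ξ‖))
  simpa only [integrand_eq_exp_pairing, smul_smul, mul_assoc] using h

theorem hasFDerivAt_integral_integrand {z₀ : Fin n → ℂ} (hz₀ : ‖euclideanIm z₀‖ < τ) :
    HasFDerivAt (fun z => ∫ ξ, integrand t τ y z ξ)
      (∫ ξ, integrand t τ y z₀ ξ • Complex.I • pairing ξ) z₀ := by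
  obtain ⟨δ, hδ, hz₀δ⟩ : ∃ δ > 0, ‖euclideanIm z₀‖ < τ - δ :=
    ⟨(τ - ‖euclideanIm z₀‖) / 2, by linarith, by linarith⟩
  set N : Set (Fin n → ℂ) := {z | ‖euclideanIm z‖ < τ - δ}
  have hN : N ∈ nhds z₀ :=
    (isOpen_lt (continuous_norm.comp continuous_euclideanIm) continuous_const).mem_nhds hz₀δ
  have hdecay : ∀ z ∈ N, ∀ ξ, ‖integrand t τ y z ξ‖ ≤ Real.exp (-(δ * ‖ξ‖)) :=
    fun z (hz : ‖euclideanIm z‖ < τ - δ) ξ => (norm_integrand_le t τ y z ξ).trans <|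
      Real.exp_le_exp.2 <| neg_le_neg <| mul_le_mul_of_nonneg_right (by linarith) (norm_nonneg ξ)
  have hint : Integrable (integrand t τ y z₀) :=
    (integrable_norm_pow_mul_exp_neg_mul_norm volume 0 hδ).mono'
      (continuous_integrand t τ y z₀).aestronglyMeasurable
      (.of_forall fun ξ => by simpa using hdecay z₀ hz₀δ ξ)
  have hderiv_le : ∀ z ∈ N, ∀ ξ, ‖integrand t τ y z ξ • Complex.I • pairing ξ‖ ≤
      ‖pairing (n := n)‖ * (‖ξ‖ ^ 1 * Real.exp (-(δ * ‖ξ‖))) := fun z hz ξ =>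
    calc ‖integrand t τ y z ξ • Complex.I • pairing ξ‖
        = ‖integrand t τ y z ξ‖ * ‖pairing ξ‖ := by
          rw [norm_smul, norm_smul, Complex.norm_I, one_mul]
      _ ≤ Real.exp (-(δ * ‖ξ‖)) * (‖pairing (n := n)‖ * ‖ξ‖) :=
          mul_le_mul (hdecay z hz ξ) (pairing.le_opNorm ξ) (norm_nonneg _) (Real.exp_nonneg _)
      _ = ‖pairing (n := n)‖ * (‖ξ‖ ^ 1 * Real.exp (-(δ * ‖ξ‖))) := by ring
  refine hasFDerivAt_integral_of_dominated_of_fderiv_le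
    (F' := fun z ξ => integrand t τ y z ξ • Complex.I • pairing ξ)
    (bound := fun ξ => ‖pairing (n := n)‖ * (‖ξ‖ ^ 1 * Real.exp (-(δ * ‖ξ‖))))
    hN ?_ hint ?_ ?_ ?_ ?_
  · exact .of_forall fun z => (continuous_integrand t τ y z).aestronglyMeasurable
  · exact ((continuous_integrand t τ y z₀).smul
      (pairing.continuous.const_smul Complex.I)).aestronglyMeasurable
  · exact .of_forall fun ξ z hz => hderiv_le z hz ξ
  · exact (integrable_norm_pow_mul_exp_neg_mul_norm volume 1 hδ).const_mul _
  · exact .of_forall fun ξ z _ => hasFDerivAt_integrand t τ y z ξ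

end

end PoissonWaveKernel

theorem poisson_kernel_holomorphic_space_general (n : ℕ) (t τ : ℝ)
    (y : Fin n → ℝ) :
    DifferentiableOn ℂ
      (fun z : Fin n → ℂ =>
        ∫ ξ : EuclideanSpace ℝ (Fin n),
          Complex.exp (Complex.I * ((t : ℂ) + τ * Complex.I) * ‖ξ‖) *
            Complex.exp (Complex.I * ∑ j, (ξ j : ℂ) * (z j - (y j : ℂ))))
      {z : Fin n → ℂ | Real.sqrt (∑ j, (z j).im ^ 2) < τ} := by
  intro z₀ hz₀
  rw [Set.mem_ofPred_eq, ← PoissonWaveKernel.norm_euclideanIm] at hz₀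
  exact (PoissonWaveKernel.hasFDerivAt_integral_integrand t τ y hz₀).differentiableAt
    |>.differentiableWithinAt

/-- Holomorphy in the space variable of the analytically continued Euclidean
Poisson-wave kernel on the tube `{z : ‖Im z‖ < τ}`. -/
theorem poisson_kernel_holomorphic_space (n : ℕ) (hn : 1 ≤ n) (t τ : ℝ) (hτ : 0 < τ)
    (y : Fin n → ℝ) :
    DifferentiableOn ℂ
      (fun z : Fin n → ℂ =>
        ∫ ξ : EuclideanSpace ℝ (Fin n),
          Complex.exp (Complex.I * ((t : ℂ) + τ * Complex.I) * ‖ξ‖) *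
            Complex.exp (Complex.I * ∑ j, (ξ j : ℂ) * (z j - (y j : ℂ))))
      {z : Fin n → ℂ | Real.sqrt (∑ j, (z j).im ^ 2) < τ} :=
  poisson_kernel_holomorphic_space_general n t τ y
end

section
/- Let λ > 0 and t ∈ ℝ. For each ε > 0 the function τ ↦ e^{itτ}(λ² − τ² + iε)^{−1} is Lebesgue integrable on ℝ, and lim_{ε→0⁺} ∫_ℝ e^{itτ} (λ² − τ² + iε)^{−1} dτ = −iπ · e^{i|t|λ}/λ. -/
/-!
For `Re c < 0` the function `s ↦ exp (c |s|)` is integrable with Fourier transform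
`ξ ↦ -2c / ((2πξ)² + c²)`, which is integrable as well. Fourier inversion at `t`, after the
substitution `τ = 2πξ`, gives `∫ exp (i t τ) (τ² + c²)⁻¹ dτ = -π exp (c |t|) / c`.
Taking `c = i a`, where `a = √(λ² + iε)` lies in the upper half-plane, the integral equals
`-iπ exp (i a |t|) / a`, and `a → λ` as `ε → 0⁺`.
-/

open Real Filter
open MeasureTheory Set FourierTransform
open Complex (I slitPlane)
open scoped Complex Topology

namespace Complex

theorem sq_mem_slitPlane {c : ℂ} (hc : c.re ≠ 0) : c ^ 2 ∈ slitPlane := by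
  rw [mem_slitPlane_iff]
  by_cases him : c.im = 0
  · left
    simpa [sq, him] using mul_self_pos.2 hc
  · right
    simp only [sq, mul_im]
    rw [mul_comm c.im]
    simpa [← two_mul] using ⟨hc, him⟩

theorem sq_sqrt (z : ℂ) : sqrt z ^ 2 = z := cpow_ofNat_inv_pow z 2

theorem sqrt_sq {z : ℂ} (hz : 0 < z.re) : sqrt (z ^ 2) = z := sq_cpow_two_inv hz

theorem im_sqrt_pos {z : ℂ} (hz : 0 < z.im) : 0 < (sqrt z).im := by
  rw [sqrt, cpow_inv_two_im_eq_sqrt hz.le, Real.sqrt_pos]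
  linarith [abs_re_lt_norm.2 hz.ne', le_abs_self z.re]

theorem tendsto_sqrt_sq_add_I_mul {a : ℝ} (ha : 0 < a) :
    Tendsto (fun ε : ℝ => sqrt (a ^ 2 + I * ε)) (𝓝 0) (𝓝 a) := by
  have hsqrt : ContinuousAt sqrt ((a : ℂ) ^ 2 + I * (0 : ℝ)) :=
    continuousAt_sqrt (.inl (by simp [← ofReal_pow]; positivity))
  have h := (hsqrt.comp (f := fun ε : ℝ => (a : ℂ) ^ 2 + I * ε) (by fun_prop)).tendsto
  simpa [Function.comp_def, sqrt_sq (z := a) (by simpa using ha)] using h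

end Complex

section TwoSidedExponential

variable {c b : ℂ}

lemma eqOn_cexp_mul_abs_add_mul_Ioi :
    EqOn (fun s : ℝ => cexp (c * |s| + b * s)) (fun s => cexp ((c + b) * s)) (Ioi 0) := by
  intro s hs
  simp only [abs_of_pos (mem_Ioi.1 hs), add_mul]

lemma eqOn_cexp_mul_abs_add_mul_Iic :
    EqOn (fun s : ℝ => cexp (c * |s| + b * s)) (fun s => cexp ((b - c) * s)) (Iic 0) := by
  intro s hs
  simp only [abs_of_nonpos (mem_Iic.1 hs), Complex.ofReal_neg]
  ring_nf

theorem integrable_cexp_mul_abs_add_mul (h : |b.re| < -c.re) :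
    Integrable fun s : ℝ => cexp (c * |s| + b * s) := by
  obtain ⟨h₁, h₂⟩ := abs_lt.1 h
  rw [← integrableOn_univ, ← Iic_union_Ioi (a := (0 : ℝ))]
  refine IntegrableOn.union ?_ ?_
  · refine (integrableOn_exp_mul_complex_Iic ?_ 0).congr_fun
      eqOn_cexp_mul_abs_add_mul_Iic.symm measurableSet_Iic
    simp only [Complex.sub_re]; linarith
  · refine (integrableOn_exp_mul_complex_Ioi ?_ 0).congr_fun
      eqOn_cexp_mul_abs_add_mul_Ioi.symm measurableSet_Ioi
    simp only [Complex.add_re]; linarith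

theorem integral_cexp_mul_abs_add_mul (h : |b.re| < -c.re) :
    ∫ s : ℝ, cexp (c * |s| + b * s) = 2 * c / (b ^ 2 - c ^ 2) := by
  obtain ⟨h₁, h₂⟩ := abs_lt.1 h
  have hIic : 0 < (b - c).re := by simp only [Complex.sub_re]; linarith
  have hIoi : (c + b).re < 0 := by simp only [Complex.add_re]; linarith
  have hf := integrable_cexp_mul_abs_add_mul h
  rw [← intervalIntegral.integral_Iic_add_Ioi hf.integrableOn hf.integrableOn,
    setIntegral_congr_fun measurableSet_Iic eqOn_cexp_mul_abs_add_mul_Iic,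
    setIntegral_congr_fun measurableSet_Ioi eqOn_cexp_mul_abs_add_mul_Ioi,
    integral_exp_mul_complex_Iic hIic, integral_exp_mul_complex_Ioi hIoi]
  simp only [Complex.ofReal_zero, mul_zero, Complex.exp_zero]
  have hne₁ : b - c ≠ 0 := fun h0 => by simp [h0] at hIic
  have hne₂ : c + b ≠ 0 := fun h0 => by simp [h0] at hIoi
  rw [show b ^ 2 - c ^ 2 = (b - c) * (c + b) by ring]
  field_simp
  ring

end TwoSidedExponential

theorem fourier_cexp_mul_abs {c : ℂ} (hc : c.re < 0) (ξ : ℝ) :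
    𝓕 (fun s : ℝ => cexp (c * |s|)) ξ = -2 * c / ((2 * π * ξ) ^ 2 + c ^ 2) := by
  have hb : |(((-2 * π * ξ : ℝ) : ℂ) * I).re| < -c.re := by simpa using hc
  rw [Real.fourier_real_eq_integral_exp_smul]
  calc _ = ∫ s : ℝ, cexp (c * |s| + ((-2 * π * ξ : ℝ) : ℂ) * I * s) := by
          congr 1; ext s
          rw [smul_eq_mul, ← Complex.exp_add]
          push_cast; ring_nf
    _ = _ := by
          rw [integral_cexp_mul_abs_add_mul hb]
          push_cast
          rw [mul_pow, Complex.I_sq, ← neg_div_neg_eq]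
          ring

theorem exists_one_add_sq_le_mul_norm_sq_add {z : ℂ} (hz : z ∈ slitPlane) :
    ∃ C, ∀ x : ℝ, 1 + x ^ 2 ≤ C * ‖(x : ℂ) ^ 2 + z‖ := by
  rcases Complex.mem_slitPlane_iff.1 hz with hre | him
  · refine ⟨1 + z.re⁻¹, fun x => ?_⟩
    have hnorm : x ^ 2 + z.re ≤ ‖(x : ℂ) ^ 2 + z‖ := by
      calc x ^ 2 + z.re = ((x : ℂ) ^ 2 + z).re := by simp [← Complex.ofReal_pow]
        _ ≤ _ := Complex.re_le_norm _
    calc 1 + x ^ 2 ≤ (1 + z.re⁻¹) * (x ^ 2 + z.re) := by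
          have : 0 ≤ z.re⁻¹ * x ^ 2 := by positivity
          rw [add_mul, one_mul, mul_add, inv_mul_cancel₀ hre.ne']
          linarith
      _ ≤ _ := by gcongr
  · refine ⟨1 + (1 + ‖z‖) / |z.im|, fun x => ?_⟩
    have him' : |z.im| ≤ ‖(x : ℂ) ^ 2 + z‖ := by
      calc |z.im| = |((x : ℂ) ^ 2 + z).im| := by simp [← Complex.ofReal_pow]
        _ ≤ _ := Complex.abs_im_le_norm _
    have hx : x ^ 2 ≤ ‖(x : ℂ) ^ 2 + z‖ + ‖z‖ := by
      have := norm_sub_le ((x : ℂ) ^ 2 + z) z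
      rwa [add_sub_cancel_right, norm_pow, Complex.norm_real, Real.norm_eq_abs, sq_abs] at this
    have : 1 + ‖z‖ ≤ (1 + ‖z‖) / |z.im| * ‖(x : ℂ) ^ 2 + z‖ := by
      rw [div_mul_eq_mul_div, le_div_iff₀ (abs_pos.2 him)]
      gcongr
    linarith

theorem integrable_inv_sq_add {z : ℂ} (hz : z ∈ slitPlane) :
    Integrable fun x : ℝ => ((x : ℂ) ^ 2 + z)⁻¹ := by
  obtain ⟨C, hC⟩ := exists_one_add_sq_le_mul_norm_sq_add hz
  have hne : ∀ x : ℝ, (x : ℂ) ^ 2 + z ≠ 0 := fun x h0 => by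
    have := hC x
    rw [h0, norm_zero, mul_zero] at this
    nlinarith [sq_nonneg x]
  refine (integrable_inv_one_add_sq.const_mul C).mono'
    (Continuous.inv₀ (by fun_prop) hne).aestronglyMeasurable (.of_forall fun x => ?_)
  rw [norm_inv, ← div_eq_mul_inv, le_div_iff₀ (by positivity),
    inv_mul_le_iff₀ (norm_pos_iff.2 (hne x)), mul_comm]
  exact hC x

theorem integrable_cexp_mul_inv_sq_add {c : ℂ} (hc : c.re ≠ 0) (t : ℝ) :
    Integrable fun τ : ℝ => cexp (I * t * τ) * ((τ : ℂ) ^ 2 + c ^ 2)⁻¹ := by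
  refine (integrable_inv_sq_add (Complex.sq_mem_slitPlane hc)).bdd_mul (c := 1) (by fun_prop)
    (.of_forall fun τ => ?_)
  rw [show I * t * τ = ((t * τ : ℝ) : ℂ) * I by push_cast; ring, Complex.norm_exp_ofReal_mul_I]

theorem integral_cexp_mul_inv_sq_add {c : ℂ} (hc : c.re < 0) (t : ℝ) :
    ∫ τ : ℝ, cexp (I * t * τ) * ((τ : ℂ) ^ 2 + c ^ 2)⁻¹ = -π * cexp (c * |t|) / c := by
  set h : ℝ → ℂ := fun τ => cexp (I * t * τ) * ((τ : ℂ) ^ 2 + c ^ 2)⁻¹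
  set g : ℝ → ℂ := fun s => cexp (c * |s|)
  have hg : Integrable g := by
    simpa using integrable_cexp_mul_abs_add_mul (b := 0) (by simpa using hc)
  have hFg : 𝓕 g = fun ξ => -2 * c * (((2 * π * ξ : ℝ) : ℂ) ^ 2 + c ^ 2)⁻¹ := by
    ext ξ; rw [fourier_cexp_mul_abs hc]; push_cast; ring
  have hFg_int : Integrable (𝓕 g) := by
    rw [hFg]
    exact ((integrable_inv_sq_add (Complex.sq_mem_slitPlane hc.ne)).comp_mul_left'
      (by positivity)).const_mul _
  have inversion :=
    hg.fourierInv_fourier_eq hFg_int ((by fun_prop : Continuous g).continuousAt (x := t))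
  have hinv : 𝓕⁻ (𝓕 g) t = -2 * c * ∫ ξ : ℝ, h (2 * π * ξ) := by
    rw [fourierInv_eq_fourier_neg, Real.fourier_real_eq_integral_exp_smul, hFg,
      ← integral_const_mul]
    congr 1; ext ξ
    simp only [h, smul_eq_mul]
    push_cast; ring_nf
  rw [hinv, Measure.integral_comp_mul_left h (2 * π), abs_of_pos (by positivity),
    Complex.real_smul] at inversion
  have hc0 : c ≠ 0 := fun h0 => by simp [h0] at hc
  rw [show cexp (c * |t|) = g t from rfl, ← inversion]
  push_cast
  field_simp

lemma cexp_mul_inv_sq_sub_eq_neg (a : ℂ) (t : ℝ) :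
    (fun τ : ℝ => cexp (I * t * τ) * (a ^ 2 - τ ^ 2)⁻¹)
      = -fun τ : ℝ => cexp (I * t * τ) * ((τ : ℂ) ^ 2 + (I * a) ^ 2)⁻¹ := by
  ext τ
  rw [Pi.neg_apply, mul_pow, Complex.I_sq, ← mul_neg, ← inv_neg]
  ring_nf

theorem integrable_cexp_mul_inv_sq_sub {a : ℂ} (ha : 0 < a.im) (t : ℝ) :
    Integrable fun τ : ℝ => cexp (I * t * τ) * (a ^ 2 - τ ^ 2)⁻¹ := by
  rw [cexp_mul_inv_sq_sub_eq_neg]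
  exact (integrable_cexp_mul_inv_sq_add (by simpa using ha.ne') t).neg

theorem integral_cexp_mul_inv_sq_sub {a : ℂ} (ha : 0 < a.im) (t : ℝ) :
    ∫ τ : ℝ, cexp (I * t * τ) * (a ^ 2 - τ ^ 2)⁻¹ = -I * π * cexp (I * a * |t|) / a := by
  rw [cexp_mul_inv_sq_sub_eq_neg, integral_neg',
    integral_cexp_mul_inv_sq_add (by simpa using ha), mul_comm I a, ← div_div, Complex.div_I]
  ring

/-- The residue computation for the Hadamard–Feynman fundamental solution:
`lim_{ε→0⁺} ∫_ℝ e^{itτ}(λ² − τ² + iε)^{−1} dτ = −iπ e^{i|t|λ}/λ`. -/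
theorem feynman_residue (lam t : ℝ) (hlam : 0 < lam) :
    (∀ ε : ℝ, 0 < ε →
      MeasureTheory.Integrable
        (fun τ : ℝ => Complex.exp (Complex.I * t * τ) *
          (((lam ^ 2 - τ ^ 2 : ℝ) : ℂ) + Complex.I * ε)⁻¹)) ∧
    Tendsto
      (fun ε : ℝ => ∫ τ : ℝ, Complex.exp (Complex.I * t * τ) *
        (((lam ^ 2 - τ ^ 2 : ℝ) : ℂ) + Complex.I * ε)⁻¹)
      (nhdsWithin 0 (Set.Ioi 0))
      (nhds (-Complex.I * π * Complex.exp (Complex.I * |t| * lam) / lam)) := by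
  set a : ℝ → ℂ := fun ε => Complex.sqrt (lam ^ 2 + I * ε)
  have ha_im : ∀ ε > 0, 0 < (a ε).im := fun ε hε =>
    Complex.im_sqrt_pos (by simpa [← Complex.ofReal_pow] using hε)
  have integrand_eq : ∀ ε : ℝ,
      (fun τ : ℝ => cexp (I * t * τ) * (((lam ^ 2 - τ ^ 2 : ℝ) : ℂ) + I * ε)⁻¹)
        = fun τ : ℝ => cexp (I * t * τ) * (a ε ^ 2 - τ ^ 2)⁻¹ := fun ε => by
    ext τ
    simp only [a, Complex.sq_sqrt]
    push_cast; ring_nf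
  refine ⟨fun ε hε => integrand_eq ε ▸ integrable_cexp_mul_inv_sq_sub (ha_im ε hε) t, ?_⟩
  have hF : ContinuousAt (fun a : ℂ => -I * π * cexp (I * a * |t|) / a) lam := by
    fun_prop (disch := simp [hlam.ne'])
  rw [mul_right_comm I]
  refine (hF.tendsto.comp ((Complex.tendsto_sqrt_sq_add_I_mul hlam).mono_left
    nhdsWithin_le_nhds)).congr' (eventually_mem_nhdsWithin.mono fun ε hε => ?_)
  dsimp only [Function.comp_apply]
  rw [integrand_eq, integral_cexp_mul_inv_sq_sub (ha_im ε hε)]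
end
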